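/- Let S be a nonempty compact topological space, and for i = 1,…,N let f_i : S → ℝ and g_i : S → ℝ be continuous with g_i(X) > 0 for all X ∈ S, and let c_i > 0 be reals. Define λ* = max_{X ∈ S} min_{1≤i≤N} f_i(X)/(c_i g_i(X)). Consider sequences (X_j)_{j≥0} in S and (λ_j)_{j≥1} in ℝ defined by the Dinkelbach-type iteration: λ_{j+1} = min_{1≤i≤N} f_i(X_j)/(c_i g_i(X_j)) for j ≥ 0, and for j ≥ 1, X_j attains max_{X ∈ S} min_{1≤i≤N} (f_i(X) − λ_j c_i g_i(X)). Then the sequence (λ_j)_{j≥1} is nondecreasing, bounded above by λ*, and converges to λ*. -/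

import Mathlib

/-!
Dinkelbach's argument. Let `X*` attain `λ*`. Since `λ_j ≤ λ*` and `X_j` maximises the parametric
objective `F(λ_j, ·) = min_i (f_i − λ_j c_i g_i)`, we get
`(λ* − λ_j) · min_i c_i g_i(X*) ≤ F(λ_j, X*) ≤ F(λ_j, X_j)`. The right-hand side is nonnegative,
which forces `λ_{j+1} ≥ λ_j`, and evaluating it at the index realising `λ_{j+1}` bounds it by
`M (λ_{j+1} − λ_j)`, where `M` bounds `c_i g_i` on the compact space `S`. The increments of the
bounded monotone sequence `λ_j` tend to `0`, hence so does `λ* − λ_j`.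
-/

open Filter Topology

/-- The minimum of a finite family of reals indexed by `Fin N`, `N > 0`. -/
noncomputable def minOver {N : ℕ} (hN : 0 < N) (v : Fin N → ℝ) : ℝ :=
  Finset.univ.inf' (Finset.univ_nonempty_iff.mpr (Fin.pos_iff_nonempty.mp hN)) v

section minOver

variable {N : ℕ} (hN : 0 < N)

lemma minOver_le (v : Fin N → ℝ) (i : Fin N) : minOver hN v ≤ v i :=
  Finset.inf'_le _ (Finset.mem_univ i)

lemma le_minOver {v : Fin N → ℝ} {a : ℝ} (h : ∀ i, a ≤ v i) : a ≤ minOver hN v :=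
  Finset.le_inf' _ _ fun i _ => h i

lemma exists_minOver_eq (v : Fin N → ℝ) : ∃ i, minOver hN v = v i := by
  obtain ⟨i, -, hi⟩ := Finset.exists_mem_eq_inf' (Finset.univ_nonempty_iff.mpr
    (Fin.pos_iff_nonempty.mp hN)) v
  exact ⟨i, hi⟩

lemma lt_minOver {v : Fin N → ℝ} {a : ℝ} (h : ∀ i, a < v i) : a < minOver hN v := by
  obtain ⟨i, hi⟩ := exists_minOver_eq hN v
  exact hi ▸ h i

end minOver

section Parametric

variable {N : ℕ} (hN : 0 < N) {a w : Fin N → ℝ} {t : ℝ}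

lemma le_minOver_div_of_nonneg_minOver_sub (hw : ∀ i, 0 < w i)
    (h : 0 ≤ minOver hN fun i => a i - t * w i) :
    t ≤ minOver hN fun i => a i / w i :=
  le_minOver hN fun i => by
    rw [le_div_iff₀ (hw i)]
    linarith [minOver_le hN (fun i => a i - t * w i) i]

lemma sub_mul_minOver_le_minOver_sub (hw : ∀ i, 0 < w i)
    (ht : t ≤ minOver hN fun i => a i / w i) :
    ((minOver hN fun i => a i / w i) - t) * minOver hN w ≤ minOver hN fun i => a i - t * w i :=
  le_minOver hN fun i => by
    have hr := minOver_le hN (fun i => a i / w i) i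
    have hwi := minOver_le hN w i
    rw [le_div_iff₀ (hw i)] at hr
    nlinarith [mul_le_mul_of_nonneg_left hwi (sub_nonneg.mpr ht)]

lemma minOver_sub_le_mul_sub {M : ℝ} (hw : ∀ i, 0 < w i) (hM : ∀ i, w i ≤ M)
    (ht : t ≤ minOver hN fun i => a i / w i) :
    (minOver hN fun i => a i - t * w i) ≤ M * ((minOver hN fun i => a i / w i) - t) := by
  obtain ⟨i, hi⟩ := exists_minOver_eq hN fun i => a i / w i
  have hai : a i - t * w i = w i * ((minOver hN fun i => a i / w i) - t) := by
    rw [hi]; field_simp [(hw i).ne']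
  calc (minOver hN fun i => a i - t * w i) ≤ a i - t * w i := minOver_le hN _ i
    _ = w i * ((minOver hN fun i => a i / w i) - t) := hai
    _ ≤ M * ((minOver hN fun i => a i / w i) - t) :=
      mul_le_mul_of_nonneg_right (hM i) (sub_nonneg.mpr ht)

end Parametric

lemma tendsto_of_sub_mul_le_mul_succ_sub {u : ℕ → ℝ} {a m M : ℝ} (hm : 0 < m)
    (hu : Monotone u) (hle : ∀ k, u k ≤ a) (hgap : ∀ k, (a - u k) * m ≤ M * (u (k + 1) - u k)) :
    Tendsto u atTop (𝓝 a) := by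
  have hbdd : BddAbove (Set.range u) := ⟨a, Set.forall_mem_range.mpr hle⟩
  have hlim := tendsto_atTop_ciSup hu hbdd
  have hsup_le : ⨆ k, u k ≤ a := ciSup_le hle
  have hincr : Tendsto (fun k => M * (u (k + 1) - u k)) atTop (𝓝 0) := by
    simpa using ((tendsto_add_atTop_iff_nat 1).mpr hlim |>.sub hlim).const_mul M
  have hgap_lim : (a - ⨆ k, u k) * m ≤ 0 :=
    le_of_tendsto_of_tendsto' ((tendsto_const_nhds.sub hlim).mul_const m) hincr hgap
  have hle_sup : a ≤ ⨆ k, u k := by nlinarith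
  exact le_antisymm hsup_le hle_sup ▸ hlim

theorem stmt11_general {S : Type*} [TopologicalSpace S] [CompactSpace S]
    {N : ℕ} (hN : 0 < N)
    (f g : Fin N → S → ℝ) (hgc : ∀ i, Continuous (g i))
    (hg : ∀ i X, 0 < g i X) (c : Fin N → ℝ) (hc : ∀ i, 0 < c i)
    (lamstar : ℝ)
    (hstar : IsGreatest
      (Set.range fun X : S => minOver hN fun i => f i X / (c i * g i X)) lamstar)
    (X : ℕ → S) (lam : ℕ → ℝ)
    (hiter : ∀ j : ℕ, lam (j + 1) = minOver hN fun i => f i (X j) / (c i * g i (X j)))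
    (hmax : ∀ j : ℕ, 1 ≤ j → ∀ Y : S,
      minOver hN (fun i => f i Y - lam j * c i * g i Y) ≤
        minOver hN fun i => f i (X j) - lam j * c i * g i (X j)) :
    (∀ j : ℕ, 1 ≤ j → lam j ≤ lam (j + 1)) ∧
      (∀ j : ℕ, 1 ≤ j → lam j ≤ lamstar) ∧
      Filter.Tendsto lam Filter.atTop (nhds lamstar) := by
  have hcg : ∀ Y i, 0 < c i * g i Y := fun Y i => mul_pos (hc i) (hg i Y)
  simp_rw [mul_assoc] at hmax
  obtain ⟨Xstar, hXstar⟩ := hstar.1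
  dsimp only at hXstar
  obtain ⟨M, hM⟩ : BddAbove (⋃ i, Set.range fun Y => c i * g i Y) :=
    (isCompact_iUnion fun i => isCompact_range (continuous_const.mul (hgc i))).bddAbove
  have hle_star : ∀ j, 1 ≤ j → lam j ≤ lamstar := by
    intro j hj
    obtain ⟨k, rfl⟩ := Nat.exists_eq_add_of_le' hj
    rw [hiter]
    exact hstar.2 ⟨X k, rfl⟩
  have hgap : ∀ j, 1 ≤ j → (lamstar - lam j) * minOver hN (fun i => c i * g i Xstar) ≤
      minOver hN fun i => f i (X j) - lam j * (c i * g i (X j)) := fun j hj =>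
    (hXstar ▸ sub_mul_minOver_le_minOver_sub hN (hcg Xstar) (hXstar ▸ hle_star j hj)).trans
      (hmax j hj Xstar)
  have hmono : ∀ j, 1 ≤ j → lam j ≤ lam (j + 1) := fun j hj => hiter j ▸
    le_minOver_div_of_nonneg_minOver_sub hN (hcg (X j))
      ((mul_nonneg (sub_nonneg.mpr (hle_star j hj))
        (lt_minOver hN (hcg Xstar)).le).trans (hgap j hj))
  have hstep : ∀ j, 1 ≤ j → (lamstar - lam j) * minOver hN (fun i => c i * g i Xstar) ≤
      M * (lam (j + 1) - lam j) := fun j hj =>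
    (hgap j hj).trans (hiter j ▸ minOver_sub_le_mul_sub hN (hcg (X j))
      (fun i => hM (Set.mem_iUnion.mpr ⟨i, X j, rfl⟩)) (hiter j ▸ hmono j hj))
  refine ⟨hmono, hle_star, (tendsto_add_atTop_iff_nat 1).mp ?_⟩
  exact tendsto_of_sub_mul_le_mul_succ_sub (lt_minOver hN (hcg Xstar))
    (monotone_nat_of_le_succ fun k => hmono (k + 1) (by omega))
    (fun k => hle_star (k + 1) (by omega)) (fun k => hstep (k + 1) (by omega))

/-- Convergence of the Dinkelbach-type algorithm for the max-min fractional program over a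
compact set: the parameter sequence `(λ_j)_{j ≥ 1}` generated by the iteration
`λ_{j+1} = min_i f_i(X_j)/(c_i g_i(X_j))`, where for `j ≥ 1` the point `X_j` maximizes the
parametric objective `min_i (f_i(·) − λ_j c_i g_i(·))` over `S`, is nondecreasing, bounded
above by `λ* = max_X min_i f_i(X)/(c_i g_i(X))`, and converges to `λ*`. -/
theorem stmt11 {S : Type*} [TopologicalSpace S] [CompactSpace S] [Nonempty S]
    {N : ℕ} (hN : 0 < N)
    (f g : Fin N → S → ℝ) (hfc : ∀ i, Continuous (f i)) (hgc : ∀ i, Continuous (g i))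
    (hg : ∀ i X, 0 < g i X) (c : Fin N → ℝ) (hc : ∀ i, 0 < c i)
    (lamstar : ℝ)
    (hstar : IsGreatest
      (Set.range fun X : S => minOver hN fun i => f i X / (c i * g i X)) lamstar)
    (X : ℕ → S) (lam : ℕ → ℝ)
    (hiter : ∀ j : ℕ, lam (j + 1) = minOver hN fun i => f i (X j) / (c i * g i (X j)))
    (hmax : ∀ j : ℕ, 1 ≤ j → ∀ Y : S,
      minOver hN (fun i => f i Y - lam j * c i * g i Y) ≤
        minOver hN fun i => f i (X j) - lam j * c i * g i (X j)) :
    (∀ j : ℕ, 1 ≤ j → lam j ≤ lam (j + 1)) ∧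
      (∀ j : ℕ, 1 ≤ j → lam j ≤ lamstar) ∧
      Filter.Tendsto lam Filter.atTop (nhds lamstar) :=
  stmt11_general hN f g hgc hg c hc lamstar hstar X lam hiter hmax
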